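/- Let |ψ⟩ ∈ H^A ⊗ H^B ⊗ H^C be a tripartite pure state whose reduced state on AC is a product: ρ^{AC} = ρ^A ⊗ ρ^C. Then there exist a decomposition of a subspace of H^B as H^{B₁} ⊗ H^{B₂}, a unitary U^B on H^B, and pure states |φ⟩ ∈ H^A ⊗ H^{B₁}, |η⟩ ∈ H^{B₂} ⊗ H^C such that (I^A ⊗ U^B ⊗ I^C)|ψ⟩ = |φ⟩ ⊗ |η⟩. -/

import Mathlib

open ComplexOrder Matrix Kronecker

noncomputable def ptraceB {A B : Type*} [Fintype B] (ρ : Matrix (A × B) (A × B) ℂ) :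
    Matrix A A ℂ := Matrix.of fun a a' => ∑ b, ρ (a, b) (a', b)

noncomputable def ptraceA {A B : Type*} [Fintype A] (ρ : Matrix (A × B) (A × B) ℂ) :
    Matrix B B ℂ := Matrix.of fun b b' => ∑ a, ρ (a, b) (a, b')

/-- For a tripartite state indexed by `A × (B × C)`, trace out the middle factor. -/
noncomputable def ptraceMid {A B C : Type*} [Fintype B]
    (ρ : Matrix (A × (B × C)) (A × (B × C)) ℂ) : Matrix (A × C) (A × C) ℂ :=
  Matrix.of fun x y => ∑ b, ρ (x.1, (b, x.2)) (y.1, (b, y.2))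

noncomputable def outerProd {n : Type*} (ψ : n → ℂ) : Matrix n n ℂ :=
  Matrix.vecMulVec ψ (star ψ)

/-!
Write `ψ` as the matrix `Ψ : (A × C) × B → ℂ`, so that `Ψ Ψᴴ = ρ^{AC} = ρ^A ⊗ ρ^C`. With the
spectral decompositions `ρ^A = ∑ pᵢ vᵢ vᵢᴴ` and `ρ^C = ∑ qⱼ wⱼ wⱼᴴ`, the rows of `(V ⊗ W)ᴴ Ψ` are
pairwise orthogonal vectors of `ℂ^B` with squared norms `pᵢ qⱼ`. Normalising the nonzero ones,
indexed by `supp p × supp q`, gives an orthonormal family; extend it to an orthonormal basis of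
`ℂ^B` and let `U` map this basis to the standard one. Then `Uψ = ∑ √(pᵢ qⱼ) vᵢ ⊗ e_{(i,j)} ⊗ wⱼ`,
which is `φ ⊗ η` for `φ = ∑ √pᵢ vᵢ ⊗ eᵢ` and `η = ∑ √qⱼ eⱼ ⊗ wⱼ`.
-/

open scoped InnerProductSpace
open Module

section OrthonormalBasis

variable {𝕜 : Type*} [RCLike 𝕜]

theorem exists_orthonormalBasis_eq_norm_smul {E κ n : Type*} [NormedAddCommGroup E]
    [InnerProductSpace 𝕜 E] [FiniteDimensional 𝕜 E] [Fintype κ] [Fintype n]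
    (hn : finrank 𝕜 E = Fintype.card n) {v : κ → E}
    (hv : Pairwise fun i j => ⟪v i, v j⟫_𝕜 = 0) (hv0 : ∀ k, v k ≠ 0) :
    ∃ (ι : κ ↪ n) (b : OrthonormalBasis n 𝕜 E), ∀ k, v k = (‖v k‖ : 𝕜) • b (ι k) := by
  classical
  set f : κ → E := fun k => (‖v k‖⁻¹ : 𝕜) • v k
  have hf : Orthonormal 𝕜 f := by
    refine ⟨fun k => norm_smul_inv_norm (hv0 k), fun i j hij => ?_⟩
    simp only [f, inner_smul_left, inner_smul_right, hv hij, mul_zero]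
  obtain ⟨ι⟩ : Nonempty (κ ↪ n) :=
    Function.Embedding.nonempty_of_card_le (hn ▸ hf.linearIndependent.fintype_card_le_finrank)
  have hext : (Set.range ι).domRestrict (Function.extend ι f 0) =
      f ∘ (Equiv.ofInjective ι ι.injective).symm := by
    ext ⟨_, k, rfl⟩ : 1
    simp only [Set.domRestrict_apply, Function.comp_apply]
    rw [Equiv.ofInjective_symm_apply, ι.injective.extend_apply]
  obtain ⟨b, hb⟩ := Orthonormal.exists_orthonormalBasis_extension_of_card_eq hn
    (s := Set.range ι) (hext ▸ hf.comp _ (Equiv.injective _))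
  refine ⟨ι, b, fun k => ?_⟩
  rw [hb (ι k) ⟨k, rfl⟩, ι.injective.extend_apply, smul_smul,
    mul_inv_cancel₀ (by simpa using hv0 k), one_smul]

theorem exists_orthonormalBasis_sum_smul_eq {E m κ n : Type*} [NormedAddCommGroup E]
    [InnerProductSpace 𝕜 E] [FiniteDimensional 𝕜 E] [Fintype m] [Fintype κ] [Fintype n]
    (hn : finrank 𝕜 E = Fintype.card n) {r : m → E}
    (hr : Pairwise fun i j => ⟪r i, r j⟫_𝕜 = 0) (e : κ ↪ m)
    (he : ∀ i, r i ≠ 0 ↔ i ∈ Set.range e) :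
    ∃ (ι : κ ↪ n) (b : OrthonormalBasis n 𝕜 E),
      ∀ w : m → 𝕜, ∑ i, w i • r i = ∑ k, (w (e k) * ‖r (e k)‖) • b (ι k) := by
  obtain ⟨ι, b, hb⟩ := exists_orthonormalBasis_eq_norm_smul hn (v := r ∘ e)
    (fun k l hkl => hr (e.injective.ne hkl)) (fun k => (he _).mpr ⟨k, rfl⟩)
  refine ⟨ι, b, fun w => ?_⟩
  calc ∑ i, w i • r i = ∑ k, w (e k) • r (e k) :=
        (Fintype.sum_of_injective e e.injective _ _
          (fun i hi => by rw [not_not.mp (mt (he i).mp hi), smul_zero]) fun _ => rfl).symm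
    _ = _ := Finset.sum_congr rfl fun k _ => by rw [mul_smul]; exact congrArg _ (hb k)

theorem OrthonormalBasis.exists_mem_unitaryGroup_mulVec_eq_inner {n : Type*} [Fintype n]
    [DecidableEq n] (b : OrthonormalBasis n 𝕜 (EuclideanSpace 𝕜 n)) :
    ∃ U ∈ unitaryGroup n 𝕜, ∀ v y, (U *ᵥ v) y = ⟪b y, WithLp.toLp 2 v⟫_𝕜 := by
  have hinner : ∀ (v : n → 𝕜) y, ⟪b y, WithLp.toLp 2 v⟫_𝕜 = ∑ j, star (b y j) * v j :=
    fun v y => by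
      simp only [EuclideanSpace.inner_eq_star_dotProduct, dotProduct, Pi.star_apply, mul_comm]
  refine ⟨of fun i j => star (b i j), ?_, fun v y => (hinner v y).symm⟩
  rw [mem_unitaryGroup_iff]
  ext i j
  simp only [mul_apply, star_apply, of_apply, star_star, one_apply, ← b.inner_eq_ite i j]
  exact (hinner _ i).symm

theorem OrthonormalBasis.sum_sum_norm_mul_sqrt_sq {m κ : Type*} [Fintype m] [Fintype κ]
    (u : OrthonormalBasis m 𝕜 (EuclideanSpace 𝕜 m)) {p : m → ℝ} (hp : ∀ i, 0 ≤ p i)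
    (e : κ ↪ m) (he : ∀ i, p i ≠ 0 ↔ i ∈ Set.range e) :
    ∑ k, ∑ a, ‖u (e k) a * √(p (e k))‖ ^ 2 = ∑ i, p i := by
  calc ∑ k, ∑ a, ‖u (e k) a * √(p (e k))‖ ^ 2 = ∑ k, p (e k) := by
        refine Finset.sum_congr rfl fun k _ => ?_
        simp only [norm_mul, RCLike.norm_ofReal, abs_of_nonneg (Real.sqrt_nonneg _), mul_pow,
          Real.sq_sqrt (hp _)]
        rw [← Finset.sum_mul, ← EuclideanSpace.norm_sq_eq, u.orthonormal.1, one_pow, one_mul]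
    _ = ∑ i, p i := Fintype.sum_of_injective e e.injective _ _
          (fun i hi => not_not.mp (mt (he i).mp hi)) fun _ => rfl

end OrthonormalBasis

theorem Matrix.exists_unitary_mulVec_eq_of_mul_conjTranspose_eq {𝕜 m n κ : Type*} [RCLike 𝕜]
    [Fintype m] [DecidableEq m] [Fintype n] [DecidableEq n] [Fintype κ]
    {Ψ : Matrix m n 𝕜} {W : Matrix m m 𝕜} (hW : W ∈ unitaryGroup m 𝕜) {d : m → ℝ}
    (hΨ : Ψ * Ψᴴ = W * diagonal (fun i => (d i : 𝕜)) * star W) (e : κ ↪ m)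
    (he : ∀ i, d i ≠ 0 ↔ i ∈ Set.range e) :
    ∃ (ι : κ ↪ n) (U : Matrix n n 𝕜), U ∈ unitaryGroup n 𝕜 ∧
      (∀ k x, (U *ᵥ Ψ x) (ι k) = W x (e k) * √(d (e k))) ∧
      ∀ b ∉ Set.range ι, ∀ x, (U *ᵥ Ψ x) b = 0 := by
  set T := star W * Ψ
  have hTT : T * Tᴴ = diagonal (fun i => (d i : 𝕜)) := by
    have hWW : star W * W = 1 := mem_unitaryGroup_iff'.mp hW
    calc T * Tᴴ = star W * (Ψ * Ψᴴ) * W := by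
          simp only [T, conjTranspose_mul, star_eq_conjTranspose, conjTranspose_conjTranspose,
            Matrix.mul_assoc]
      _ = (star W * W) * diagonal (fun i => (d i : 𝕜)) * (star W * W) := by
          rw [hΨ]; simp only [Matrix.mul_assoc]
      _ = _ := by rw [hWW, Matrix.one_mul, Matrix.mul_one]
  set r : m → EuclideanSpace 𝕜 n := fun i => WithLp.toLp 2 (T i)
  have hr : ∀ i j, ⟪r i, r j⟫_𝕜 = diagonal (fun i => (d i : 𝕜)) j i := fun i j => by
    rw [← hTT]; rfl
  have hnorm_sq : ∀ i, ‖r i‖ ^ 2 = d i := fun i => by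
    rw [← inner_self_eq_norm_sq (𝕜 := 𝕜), hr, diagonal_apply_eq, RCLike.ofReal_re]
  obtain ⟨ι, b, hb⟩ := exists_orthonormalBasis_sum_smul_eq (finrank_euclideanSpace (𝕜 := 𝕜))
    (r := r) (fun i j hij => (hr i j).trans (diagonal_apply_ne _ (Ne.symm hij))) e
    (fun i => by rw [← norm_ne_zero_iff, ← pow_ne_zero_iff two_ne_zero, hnorm_sq, he])
  have hΨx : ∀ x, WithLp.toLp 2 (Ψ x) = ∑ k, (W x (e k) * √(d (e k)) : 𝕜) • b (ι k) := by
    intro x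
    have hΨT : Ψ = W * T := by
      rw [← Matrix.mul_assoc, mem_unitaryGroup_iff.mp hW, Matrix.one_mul]
    have hsqrt : ∀ k, √(d (e k)) = ‖r (e k)‖ := fun k => by
      rw [← hnorm_sq, Real.sqrt_sq (norm_nonneg _)]
    simp only [hsqrt]
    rw [← hb (W x), hΨT, mul_apply_eq_vecMul, vecMul_eq_sum, WithLp.toLp_sum]
    rfl
  obtain ⟨U, hU, hUb⟩ := b.exists_mem_unitaryGroup_mulVec_eq_inner
  refine ⟨ι, U, hU, fun k x => ?_, fun y hy x => ?_⟩
  · rw [hUb, hΨx, inner_sum, Finset.sum_eq_single k, inner_smul_right, b.inner_eq_one, mul_one]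
    · intro l _ hlk
      rw [inner_smul_right, b.inner_eq_zero (ι.injective.ne hlk.symm), mul_zero]
    · exact fun h => absurd (Finset.mem_univ k) h
  · rw [hUb, hΨx, inner_sum]
    refine Finset.sum_eq_zero fun l _ => ?_
    rw [inner_smul_right, b.inner_eq_zero (fun h => hy ⟨l, h.symm⟩), mul_zero]

theorem Matrix.IsHermitian.kronecker_eq {𝕜 m n : Type*} [RCLike 𝕜] [Fintype m] [DecidableEq m]
    [Fintype n] [DecidableEq n] {M : Matrix m m 𝕜} {N : Matrix n n 𝕜} (hM : M.IsHermitian)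
    (hN : N.IsHermitian) :
    M ⊗ₖ N = ((hM.eigenvectorUnitary : Matrix m m 𝕜) ⊗ₖ (hN.eigenvectorUnitary : Matrix n n 𝕜)) *
      diagonal (fun x => ((hM.eigenvalues x.1 * hN.eigenvalues x.2 : ℝ) : 𝕜)) *
      star ((hM.eigenvectorUnitary : Matrix m m 𝕜) ⊗ₖ (hN.eigenvectorUnitary : Matrix n n 𝕜)) := by
  conv_lhs => rw [hM.spectral_theorem, hN.spectral_theorem]
  have hdiag : diagonal (fun x : m × n => ((hM.eigenvalues x.1 * hN.eigenvalues x.2 : ℝ) : 𝕜))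
      = diagonal (RCLike.ofReal ∘ hM.eigenvalues) ⊗ₖ diagonal (RCLike.ofReal ∘ hN.eigenvalues) := by
    rw [diagonal_kronecker_diagonal]
    simp only [Function.comp_apply, RCLike.ofReal_mul]
  simp only [Unitary.conjStarAlgAut_apply, hdiag, star_eq_conjTranspose, conjTranspose_kronecker,
    mul_kronecker_mul]

theorem Matrix.PosSemidef.sum_sum_norm_eigenvectorBasis_mul_sqrt_sq {𝕜 m κ : Type*} [RCLike 𝕜]
    [Fintype m] [DecidableEq m] [Fintype κ] {M : Matrix m m 𝕜} (hM : M.PosSemidef)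
    (h1 : M.trace = 1) (e : κ ↪ m) (he : ∀ i, hM.isHermitian.eigenvalues i ≠ 0 ↔ i ∈ Set.range e) :
    ∑ k, ∑ a, ‖hM.isHermitian.eigenvectorBasis (e k) a *
      √(hM.isHermitian.eigenvalues (e k))‖ ^ 2 = 1 := by
  rw [OrthonormalBasis.sum_sum_norm_mul_sqrt_sq _ hM.eigenvalues_nonneg e he]
  exact_mod_cast hM.isHermitian.trace_eq_sum_eigenvalues.symm.trans h1

theorem exists_fin_embedding_range_eq {α : Type*} [Fintype α] (P : α → Prop) [DecidablePred P] :
    ∃ (n : ℕ) (e : Fin n ↪ α), ∀ i, P i ↔ i ∈ Set.range e :=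
  ⟨_, (Fintype.equivFin {i // P i}).symm.toEmbedding.trans (Function.Embedding.subtype P),
    fun i => ⟨fun hi => ⟨Fintype.equivFin _ ⟨i, hi⟩, by simp⟩,
      by rintro ⟨k, rfl⟩; exact ((Fintype.equivFin _).symm k).2⟩⟩

theorem posSemidef_ptraceB_outerProd {A B : Type*} [Fintype A] [Fintype B] (ψ : A × B → ℂ) :
    (ptraceB (outerProd ψ)).PosSemidef := by
  have h : ptraceB (outerProd ψ) = of (Function.curry ψ) * (of (Function.curry ψ))ᴴ := by
    ext a a'
    simp [ptraceB, outerProd, vecMulVec_apply, mul_apply]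
  rw [h]
  exact posSemidef_self_mul_conjTranspose _

theorem posSemidef_ptraceA_ptraceA_outerProd {A B C : Type*} [Fintype A] [Fintype B] [Fintype C]
    (ψ : A × (B × C) → ℂ) : (ptraceA (ptraceA (outerProd ψ))).PosSemidef := by
  set N : Matrix C (A × B) ℂ := of fun c x => ψ (x.1, (x.2, c))
  have h : ptraceA (ptraceA (outerProd ψ)) = N * Nᴴ := by
    ext c c'
    simp only [N, ptraceA, outerProd, of_apply, vecMulVec_apply, mul_apply, conjTranspose_apply,
      Fintype.sum_prod_type, Pi.star_apply]
    exact Finset.sum_comm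
  rw [h]
  exact posSemidef_self_mul_conjTranspose _

theorem ptraceMid_outerProd {A B C : Type*} [Fintype B] (ψ : A × (B × C) → ℂ) :
    ptraceMid (outerProd ψ) =
      (of fun (x : A × C) b => ψ (x.1, (b, x.2))) *
        (of fun (x : A × C) b => ψ (x.1, (b, x.2)))ᴴ := by
  ext x y
  simp [ptraceMid, outerProd, vecMulVec_apply, mul_apply]

theorem trace_ptraceB {A B : Type*} [Fintype A] [Fintype B] (ρ : Matrix (A × B) (A × B) ℂ) :
    trace (ptraceB ρ) = trace ρ := by
  simp [trace, ptraceB, Fintype.sum_prod_type]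

theorem trace_ptraceA {A B : Type*} [Fintype A] [Fintype B] (ρ : Matrix (A × B) (A × B) ℂ) :
    trace (ptraceA ρ) = trace ρ := by
  simp only [trace, ptraceA, diag_apply, of_apply, Fintype.sum_prod_type]
  exact Finset.sum_comm

theorem trace_outerProd {n : Type*} [Fintype n] (ψ : n → ℂ) :
    trace (outerProd ψ) = ((∑ x, ‖ψ x‖ ^ 2 : ℝ) : ℂ) := by
  simp [trace, outerProd, vecMulVec_apply, RCLike.mul_conj]

/-- If a tripartite pure state has product reduced state `ρ^{AC} = ρ^A ⊗ ρ^C`, then up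
to a local unitary on `B` it factorizes as `|φ⟩^{AB₁} ⊗ |η⟩^{B₂C}` across a virtual
bipartition `B₁ ⊗ B₂` of a subspace of `H^B`. -/
theorem stmt10 {A B C : Type*} [Fintype A] [Fintype B] [Fintype C] [DecidableEq B]
    (ψ : A × (B × C) → ℂ) (hψ : ∑ x, ‖ψ x‖ ^ 2 = 1)
    (hprod : ptraceMid (outerProd ψ) =
      ptraceB (outerProd ψ) ⊗ₖ ptraceA (ptraceA (outerProd ψ))) :
    ∃ (n₁ n₂ : ℕ) (ι : Fin n₁ × Fin n₂ ↪ B) (U : Matrix B B ℂ),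
      U ∈ Matrix.unitaryGroup B ℂ ∧
      ∃ (φ : A × Fin n₁ → ℂ) (η : Fin n₂ × C → ℂ),
        (∑ x, ‖φ x‖ ^ 2 = 1) ∧ (∑ x, ‖η x‖ ^ 2 = 1) ∧
        (∀ a b₁ b₂ c, (∑ b', U (ι (b₁, b₂)) b' * ψ (a, (b', c))) = φ (a, b₁) * η (b₂, c)) ∧
        (∀ a b c, b ∉ Set.range ι → (∑ b', U b b' * ψ (a, (b', c))) = 0) := by
  classical
  have hPA := posSemidef_ptraceB_outerProd ψ
  have hPC := posSemidef_ptraceA_ptraceA_outerProd ψ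
  have htr : trace (outerProd ψ) = 1 := by rw [trace_outerProd, hψ, Complex.ofReal_one]
  set p := hPA.isHermitian.eigenvalues
  set q := hPC.isHermitian.eigenvalues
  obtain ⟨n₁, e₁, he₁⟩ := exists_fin_embedding_range_eq (fun i => p i ≠ 0)
  obtain ⟨n₂, e₂, he₂⟩ := exists_fin_embedding_range_eq (fun j => q j ≠ 0)
  obtain ⟨ι, U, hU, hι, hιc⟩ := exists_unitary_mulVec_eq_of_mul_conjTranspose_eq
    (Ψ := of fun (x : A × C) b => ψ (x.1, (b, x.2))) (d := fun x => p x.1 * q x.2)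
    (kronecker_mem_unitary hPA.isHermitian.eigenvectorUnitary.2
      hPC.isHermitian.eigenvectorUnitary.2)
    (by rw [← ptraceMid_outerProd ψ, hprod, hPA.isHermitian.kronecker_eq hPC.isHermitian])
    (e₁.prodMap e₂) (fun x => by
      rw [Function.Embedding.coe_prodMap, Set.range_prodMap, mul_ne_zero_iff, he₁, he₂]; rfl)
  refine ⟨n₁, n₂, ι, U, hU,
    fun x => hPA.isHermitian.eigenvectorBasis (e₁ x.2) x.1 * √(p (e₁ x.2)),
    fun x => hPC.isHermitian.eigenvectorBasis (e₂ x.1) x.2 * √(q (e₂ x.1)), ?_, ?_,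
    fun a b₁ b₂ c => (hι (b₁, b₂) (a, c)).trans ?_, fun a b c hb => hιc b hb (a, c)⟩
  -- the general lemmas are stated with `RCLike.ofReal`, only defeq to the coercion `ℝ → ℂ`
  · rw [← RCLike.ofReal_eq_complex_ofReal, Fintype.sum_prod_type_right]
    exact hPA.sum_sum_norm_eigenvectorBasis_mul_sqrt_sq (by rw [trace_ptraceB, htr]) e₁ he₁
  · rw [← RCLike.ofReal_eq_complex_ofReal, Fintype.sum_prod_type]
    exact hPC.sum_sum_norm_eigenvectorBasis_mul_sqrt_sq
      (by rw [trace_ptraceA, trace_ptraceA, htr]) e₂ he₂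
  · simp only [Function.Embedding.coe_prodMap, Prod.map, kronecker_apply,
      IsHermitian.eigenvectorUnitary_apply]
    rw [Real.sqrt_mul (hPA.eigenvalues_nonneg _), RCLike.ofReal_mul,
      RCLike.ofReal_eq_complex_ofReal]
    ring
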